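/- arXiv:2301.04994 — 3 statements merged into one kernel-verified Lean document; each statement's English description precedes it below -/
import Mathlib

section
/- There exist constants c_1(d), c_2(d) > 0 such that for all natural numbers n ≥ 1, c_1(d) (n+1)^{(d-1)/2} ≤ ((n!)^2 / (2n)!) · ∑_{α ∈ ℕ_0^d, |α| = n} (2α)! / (α!)^2 ≤ c_2(d) (n+1)^{(d-1)/2}. -/
/-!
Since `(n!)² / (2n)! = 1 / C(2n, n)` and `(2a)! / (a!)² = C(2a, a)`, the quantity is
`[xⁿ] F(x)^d / C(2n, n)` with `F = ∑ₐ C(2a, a) xᵃ`. For every `a`,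
`4ᵃ / (2√(a+1)) ≤ C(2a, a) ≤ 4ᵃ / √(a+1)`, and uniform two-sided bounds (`Θ` along the filter
`⊤`) between nonnegative sequences survive Cauchy products. Hence, by induction on `d`,
`[xⁿ] F^d ≍ 4ⁿ (n+1)^(d/2-1)`, the inductive step being
`∑_{i+j=n} (i+1)^(-1/2) (j+1)^b ≍ (n+1)^(b+1/2)` for `b ≥ -1/2`.
Dividing by `C(2n, n) ≍ 4ⁿ (n+1)^(-1/2)` leaves `(n+1)^((d-1)/2)`.
-/

open Finset Asymptotics Real

theorem isTheta_top_iff_of_nonneg {α : Type*} {f g : α → ℝ} (hf : 0 ≤ f) (hg : 0 ≤ g) :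
    f =Θ[⊤] g ↔ ∃ c₁ c₂ : ℝ, 0 < c₁ ∧ 0 < c₂ ∧ ∀ x, c₁ * g x ≤ f x ∧ f x ≤ c₂ * g x := by
  have hnorm {c : ℝ} {u v : α → ℝ} (hu : 0 ≤ u) (hv : 0 ≤ v) :
      IsBigOWith c ⊤ u v ↔ ∀ x, u x ≤ c * v x := by
    simp only [isBigOWith_top, Real.norm_of_nonneg (hu _), Real.norm_of_nonneg (hv _)]
  constructor
  · rintro ⟨hfg, hgf⟩
    obtain ⟨c₂, hc₂, hfg⟩ := hfg.exists_pos
    obtain ⟨c, hc, hgf⟩ := hgf.exists_pos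
    rw [hnorm hf hg] at hfg
    rw [hnorm hg hf] at hgf
    exact ⟨c⁻¹, c₂, inv_pos.2 hc, hc₂, fun x => ⟨(inv_mul_le_iff₀ hc).2 (hgf x), hfg x⟩⟩
  · rintro ⟨c₁, c₂, hc₁, -, h⟩
    exact ⟨((hnorm hf hg).2 fun x => (h x).2).isBigO,
      ((hnorm (c := c₁⁻¹) hg hf).2 fun x => (le_inv_mul_iff₀ hc₁).2 (h x).1).isBigO⟩

theorem Asymptotics.IsTheta.sum_antidiagonal {A : Type*} [AddMonoid A] [HasAntidiagonal A]
    {u v φ ψ : A → ℝ} (hu : 0 ≤ u) (hv : 0 ≤ v) (hφ : 0 ≤ φ) (hψ : 0 ≤ ψ)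
    (huφ : u =Θ[⊤] φ) (hvψ : v =Θ[⊤] ψ) :
    (fun n => ∑ p ∈ antidiagonal n, u p.1 * v p.2) =Θ[⊤]
      fun n => ∑ p ∈ antidiagonal n, φ p.1 * ψ p.2 := by
  obtain ⟨a₁, a₂, ha₁, ha₂, hua⟩ := (isTheta_top_iff_of_nonneg hu hφ).1 huφ
  obtain ⟨b₁, b₂, hb₁, hb₂, hvb⟩ := (isTheta_top_iff_of_nonneg hv hψ).1 hvψ
  refine (isTheta_top_iff_of_nonneg (fun n => sum_nonneg fun p _ => mul_nonneg (hu _) (hv _))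
    (fun n => sum_nonneg fun p _ => mul_nonneg (hφ _) (hψ _))).2
    ⟨a₁ * b₁, a₂ * b₂, by positivity, by positivity, fun n => ⟨?_, ?_⟩⟩ <;>
    rw [mul_sum] <;> refine sum_le_sum fun p _ => ?_
  · calc a₁ * b₁ * (φ p.1 * ψ p.2) = (a₁ * φ p.1) * (b₁ * ψ p.2) := by ring
      _ ≤ u p.1 * v p.2 :=
        mul_le_mul (hua _).1 (hvb _).1 (mul_nonneg hb₁.le (hψ _)) (hu _)
  · calc u p.1 * v p.2 ≤ (a₂ * φ p.1) * (b₂ * ψ p.2) :=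
        mul_le_mul (hua _).2 (hvb _).2 (hv _) (mul_nonneg ha₂.le (hφ _))
      _ = a₂ * b₂ * (φ p.1 * ψ p.2) := by ring

theorem Nat.centralBinom_sq_mul_succ_le (n : ℕ) : n.centralBinom ^ 2 * (n + 1) ≤ 16 ^ n := by
  induction n with
  | zero => simp
  | succ n ih =>
    refine Nat.le_of_mul_le_mul_right (?_ : _ * (n + 1) ^ 3 ≤ _ * (n + 1) ^ 3) (by positivity)
    calc (n + 1).centralBinom ^ 2 * (n + 1 + 1) * (n + 1) ^ 3
        = ((n + 1) * (n + 1).centralBinom) ^ 2 * ((n + 2) * (n + 1)) := by ring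
      _ = (2 * (2 * n + 1) * n.centralBinom) ^ 2 * ((n + 2) * (n + 1)) := by
        rw [Nat.succ_mul_centralBinom_succ]
      _ = (4 * (2 * n + 1) ^ 2 * (n + 2)) * (n.centralBinom ^ 2 * (n + 1)) := by ring
      _ ≤ (16 * (n + 1) ^ 3) * 16 ^ n := Nat.mul_le_mul (by nlinarith) ih
      _ = 16 ^ (n + 1) * (n + 1) ^ 3 := by ring

theorem Nat.sixteen_pow_le_centralBinom_sq_mul (n : ℕ) :
    16 ^ n ≤ n.centralBinom ^ 2 * (4 * n + 1) := by
  induction n with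
  | zero => simp
  | succ n ih =>
    refine Nat.le_of_mul_le_mul_right (?_ : _ * (n + 1) ^ 2 ≤ _ * (n + 1) ^ 2) (by positivity)
    calc 16 ^ (n + 1) * (n + 1) ^ 2 = 16 * (n + 1) ^ 2 * 16 ^ n := by ring
      _ ≤ 16 * (n + 1) ^ 2 * (n.centralBinom ^ 2 * (4 * n + 1)) := Nat.mul_le_mul_left _ ih
      _ = (16 * (n + 1) ^ 2 * (4 * n + 1)) * n.centralBinom ^ 2 := by ring
      _ ≤ (4 * (4 * n + 5) * (2 * n + 1) ^ 2) * n.centralBinom ^ 2 :=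
        Nat.mul_le_mul_right _ (by nlinarith)
      _ = (2 * (2 * n + 1) * n.centralBinom) ^ 2 * (4 * n + 5) := by ring
      _ = ((n + 1) * (n + 1).centralBinom) ^ 2 * (4 * n + 5) := by
        rw [Nat.succ_mul_centralBinom_succ]
      _ = (n + 1).centralBinom ^ 2 * (4 * (n + 1) + 1) * (n + 1) ^ 2 := by ring

theorem Nat.cast_centralBinom_eq_factorial_div (K : Type*) [Field K] [CharZero K] (n : ℕ) :
    (n.centralBinom : K) = (2 * n).factorial / (n.factorial : K) ^ 2 := by
  rw [Nat.centralBinom_eq_two_mul_choose, Nat.cast_choose K (by omega : n ≤ 2 * n),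
    show 2 * n - n = n by omega, sq]

theorem isTheta_centralBinom :
    (fun n : ℕ => (n.centralBinom : ℝ)) =Θ[⊤] fun n => 4 ^ n / √((n : ℝ) + 1) := by
  refine (isTheta_top_iff_of_nonneg (fun n => by positivity) (fun n => by positivity)).2
    ⟨1 / 2, 1, by norm_num, by norm_num, fun n => ⟨?_, ?_⟩⟩ <;>
    rw [← pow_le_pow_iff_left₀ (by positivity) (by positivity) two_ne_zero]
  all_goals
    have hsq : (4 ^ n / √((n : ℝ) + 1)) ^ 2 = 16 ^ n / ((n : ℝ) + 1) := by
      rw [div_pow, sq_sqrt (by positivity), ← pow_mul, mul_comm n, pow_mul]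
      norm_num
    have hup := Nat.centralBinom_sq_mul_succ_le n
    have hlow := Nat.sixteen_pow_le_centralBinom_sq_mul n
    rw [← Nat.cast_le (α := ℝ)] at hup hlow
    push_cast at hup hlow
    rw [mul_pow, hsq, ← mul_div_assoc]
  · rw [div_le_iff₀ (by positivity)]
    nlinarith
  · rw [one_pow, one_mul, le_div_iff₀ (by positivity)]
    exact hup

theorem sum_range_inv_sqrt_succ_le (n : ℕ) :
    ∑ k ∈ range n, (√((k : ℝ) + 1))⁻¹ ≤ 2 * √n := by
  induction n with
  | zero => simp
  | succ n ih =>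
    rw [sum_range_succ, Nat.cast_succ]
    have hn := sq_sqrt (Nat.cast_nonneg (α := ℝ) n)
    have hn1 := sq_sqrt (by positivity : (0 : ℝ) ≤ n + 1)
    have hpos : 0 < √((n : ℝ) + 1) := by positivity
    have hstep : (√((n : ℝ) + 1))⁻¹ ≤ 2 * √((n : ℝ) + 1) - 2 * √n := by
      rw [inv_le_iff_one_le_mul₀' hpos]
      nlinarith [sq_nonneg (√((n : ℝ) + 1) - √n)]
    linarith

theorem sum_antidiagonal_inv_sqrt_mul_inv_sqrt_le (n : ℕ) :
    ∑ p ∈ antidiagonal n, (√((p.1 : ℝ) + 1))⁻¹ * (√((p.2 : ℝ) + 1))⁻¹ ≤ 4 := by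
  have hn : 0 < √((n : ℝ) + 1) := by positivity
  calc ∑ p ∈ antidiagonal n, (√((p.1 : ℝ) + 1))⁻¹ * (√((p.2 : ℝ) + 1))⁻¹
      ≤ ∑ p ∈ antidiagonal n, ((√((p.1 : ℝ) + 1))⁻¹ + (√((p.2 : ℝ) + 1))⁻¹) / √((n : ℝ) + 1) := by
        refine sum_le_sum fun p hp => ?_
        rw [HasAntidiagonal.mem_antidiagonal] at hp
        set a := √((p.1 : ℝ) + 1)
        set b := √((p.2 : ℝ) + 1)
        have ha : 0 < a := by positivity
        have hb : 0 < b := by positivity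
        -- `a⁻¹ b⁻¹ = (a⁻¹ + b⁻¹) / (a + b)` and `(a + b)² ≥ a² + b² = n + 2`
        have hab : √((n : ℝ) + 1) ≤ a + b := by
          rw [sqrt_le_left (by positivity)]
          have : (n : ℝ) = p.1 + p.2 := by exact_mod_cast hp.symm
          nlinarith [sq_sqrt (by positivity : (0 : ℝ) ≤ p.1 + 1),
            sq_sqrt (by positivity : (0 : ℝ) ≤ p.2 + 1)]
        calc a⁻¹ * b⁻¹ = (a⁻¹ + b⁻¹) / (a + b) := by field_simp; ring
          _ ≤ (a⁻¹ + b⁻¹) / √((n : ℝ) + 1) := div_le_div_of_nonneg_left (by positivity) hn hab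
    _ = 2 * (∑ k ∈ range (n + 1), (√((k : ℝ) + 1))⁻¹) / √((n : ℝ) + 1) := by
        have hfst : ∑ p ∈ antidiagonal n, (√((p.1 : ℝ) + 1))⁻¹ =
            ∑ k ∈ range (n + 1), (√((k : ℝ) + 1))⁻¹ :=
          Nat.sum_antidiagonal_eq_sum_range_succ_mk _ n
        have hsnd : ∑ p ∈ antidiagonal n, (√((p.2 : ℝ) + 1))⁻¹ =
            ∑ p ∈ antidiagonal n, (√((p.1 : ℝ) + 1))⁻¹ :=
          Nat.sum_antidiagonal_swap (f := fun p => (√((p.1 : ℝ) + 1))⁻¹)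
        rw [← sum_div, sum_add_distrib, hsnd, hfst, two_mul]
    _ ≤ 4 := by
        rw [div_le_iff₀ hn]
        have := sum_range_inv_sqrt_succ_le (n + 1)
        push_cast at this
        linarith

theorem le_sum_antidiagonal_rpow {e : ℝ} (he : 0 ≤ e) (n : ℕ) :
    (((n : ℝ) + 1) / 2) ^ (e + 1) ≤ ∑ p ∈ antidiagonal n, ((p.2 : ℝ) + 1) ^ e := by
  have hswap : ∑ p ∈ antidiagonal n, ((p.2 : ℝ) + 1) ^ e =
      ∑ p ∈ antidiagonal n, ((p.1 : ℝ) + 1) ^ e :=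
    Nat.sum_antidiagonal_swap (f := fun p => ((p.1 : ℝ) + 1) ^ e)
  -- one of `p.1 + 1`, `p.2 + 1` is at least `(n + 1) / 2`
  have hterm : ∀ p ∈ antidiagonal n,
      (((n : ℝ) + 1) / 2) ^ e ≤ ((p.1 : ℝ) + 1) ^ e + ((p.2 : ℝ) + 1) ^ e := by
    intro p hp
    rw [HasAntidiagonal.mem_antidiagonal] at hp
    have hn : (n : ℝ) = p.1 + p.2 := by exact_mod_cast hp.symm
    rcases le_total p.1 p.2 with h | h
    · have : (p.1 : ℝ) ≤ p.2 := by exact_mod_cast h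
      exact le_add_of_nonneg_of_le (by positivity) (rpow_le_rpow (by positivity) (by linarith) he)
    · have : (p.2 : ℝ) ≤ p.1 := by exact_mod_cast h
      exact le_add_of_le_of_nonneg (rpow_le_rpow (by positivity) (by linarith) he) (by positivity)
  have hsum := card_nsmul_le_sum _ _ _ hterm
  rw [sum_add_distrib, ← hswap, Nat.card_antidiagonal, nsmul_eq_mul] at hsum
  rw [rpow_add_one (by positivity)]
  push_cast at hsum
  linarith

theorem rpow_eq_rpow_add_half_div_sqrt {x : ℝ} (hx : 0 < x) (b : ℝ) :
    x ^ b = x ^ (b + 1 / 2) / √x := by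
  rw [rpow_add hx, sqrt_eq_rpow, mul_div_cancel_right₀ _ (by positivity)]

theorem isTheta_sum_antidiagonal_inv_sqrt_mul_rpow {b : ℝ} (hb : -(1 / 2) ≤ b) :
    (fun n : ℕ => ∑ p ∈ antidiagonal n, (√((p.1 : ℝ) + 1))⁻¹ * ((p.2 : ℝ) + 1) ^ b) =Θ[⊤]
      fun n => ((n : ℝ) + 1) ^ (b + 1 / 2) := by
  have he : 0 ≤ b + 1 / 2 := by linarith
  refine (isTheta_top_iff_of_nonneg (fun n => by positivity) (fun n => by positivity)).2
    ⟨1 / 2 ^ (b + 1 / 2 + 1), 4, by positivity, by norm_num, fun n => ⟨?_, ?_⟩⟩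
  · have hn : 0 < (n : ℝ) + 1 := by positivity
    calc 1 / 2 ^ (b + 1 / 2 + 1) * ((n : ℝ) + 1) ^ (b + 1 / 2)
        = ((n : ℝ) + 1)⁻¹ * (((n : ℝ) + 1) / 2) ^ (b + 1 / 2 + 1) := by
          rw [div_rpow hn.le (by norm_num), rpow_add_one hn.ne']
          field_simp
      _ ≤ ((n : ℝ) + 1)⁻¹ * ∑ p ∈ antidiagonal n, ((p.2 : ℝ) + 1) ^ (b + 1 / 2) := by
          gcongr
          exact le_sum_antidiagonal_rpow he n
      _ = ∑ p ∈ antidiagonal n,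
            (√((n : ℝ) + 1))⁻¹ * (((p.2 : ℝ) + 1) ^ (b + 1 / 2) / √((n : ℝ) + 1)) := by
          rw [mul_sum]
          refine sum_congr rfl fun p _ => ?_
          field_simp
          rw [sq_sqrt hn.le]
      _ ≤ ∑ p ∈ antidiagonal n, (√((p.1 : ℝ) + 1))⁻¹ * ((p.2 : ℝ) + 1) ^ b := by
          gcongr with p hp
          · exact HasAntidiagonal.antidiagonal.fst_le hp
          · rw [rpow_eq_rpow_add_half_div_sqrt (by positivity : (0 : ℝ) < p.2 + 1) b]
            gcongr
            exact HasAntidiagonal.antidiagonal.snd_le hp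
  · calc ∑ p ∈ antidiagonal n, (√((p.1 : ℝ) + 1))⁻¹ * ((p.2 : ℝ) + 1) ^ b
        ≤ ∑ p ∈ antidiagonal n,
            ((n : ℝ) + 1) ^ (b + 1 / 2) * ((√((p.1 : ℝ) + 1))⁻¹ * (√((p.2 : ℝ) + 1))⁻¹) := by
          refine sum_le_sum fun p hp => ?_
          calc (√((p.1 : ℝ) + 1))⁻¹ * ((p.2 : ℝ) + 1) ^ b
              = ((p.2 : ℝ) + 1) ^ (b + 1 / 2) * ((√((p.1 : ℝ) + 1))⁻¹ * (√((p.2 : ℝ) + 1))⁻¹) := by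
                rw [rpow_eq_rpow_add_half_div_sqrt (by positivity : (0 : ℝ) < p.2 + 1)]
                ring
            _ ≤ _ := by
                gcongr
                exact HasAntidiagonal.antidiagonal.snd_le hp
      _ ≤ 4 * ((n : ℝ) + 1) ^ (b + 1 / 2) := by
          rw [← mul_sum, mul_comm]
          exact mul_le_mul_of_nonneg_right (sum_antidiagonal_inv_sqrt_mul_inv_sqrt_le n)
            (by positivity)

theorem PowerSeries.coeff_pow_eq_sum_piAntidiag {R : Type*} [CommSemiring R] (f : PowerSeries R)
    (d n : ℕ) :
    coeff n (f ^ d) = ∑ α ∈ piAntidiag (univ : Finset (Fin d)) n, ∏ j, coeff (α j) f := by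
  rw [← Fin.prod_const, coeff_prod, finsuppAntidiag, sum_map]
  exact sum_attach (piAntidiag univ n) fun α : Fin d → ℕ => ∏ j, coeff (α j) f

noncomputable def centralBinomSeries : PowerSeries ℝ :=
  PowerSeries.mk fun n => (n.centralBinom : ℝ)

theorem coeff_centralBinomSeries_pow_nonneg (d n : ℕ) :
    0 ≤ PowerSeries.coeff n (centralBinomSeries ^ d) := by
  rw [PowerSeries.coeff_pow_eq_sum_piAntidiag]
  exact sum_nonneg fun α _ => prod_nonneg fun j _ => by simp [centralBinomSeries]

theorem isTheta_coeff_centralBinomSeries_pow {d : ℕ} (hd : 1 ≤ d) :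
    (fun n => PowerSeries.coeff n (centralBinomSeries ^ d)) =Θ[⊤]
      fun n => 4 ^ n * ((n : ℝ) + 1) ^ ((d : ℝ) / 2 - 1) := by
  induction d, hd using Nat.le_induction with
  | base =>
    convert isTheta_centralBinom using 1
    · funext n
      simp [centralBinomSeries]
    · funext n
      rw [Nat.cast_one, show (1 : ℝ) / 2 - 1 = -(1 / 2) by norm_num, rpow_neg (by positivity),
        ← sqrt_eq_rpow, div_eq_mul_inv]
  | succ d hd ih =>
    have hb : -(1 / 2) ≤ (d : ℝ) / 2 - 1 := by
      have : (1 : ℝ) ≤ d := by exact_mod_cast hd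
      linarith
    have hconv := isTheta_centralBinom.sum_antidiagonal (fun n => by positivity)
      (coeff_centralBinomSeries_pow_nonneg d) (fun n => by positivity) (fun n => by positivity) ih
    have hweight := (isTheta_refl (fun n : ℕ => (4 : ℝ) ^ n) ⊤).mul
      (isTheta_sum_antidiagonal_inv_sqrt_mul_rpow hb)
    have hcoeff : (fun n => PowerSeries.coeff n (centralBinomSeries ^ (d + 1))) =
        fun n => ∑ p ∈ antidiagonal n,
          (p.1.centralBinom : ℝ) * PowerSeries.coeff p.2 (centralBinomSeries ^ d) := by
      funext n
      rw [pow_succ', PowerSeries.coeff_mul]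
      simp [centralBinomSeries]
    have hfactor : (fun n : ℕ => ∑ p ∈ antidiagonal n,
          4 ^ p.1 / √((p.1 : ℝ) + 1) * (4 ^ p.2 * ((p.2 : ℝ) + 1) ^ ((d : ℝ) / 2 - 1))) =
        fun n : ℕ => 4 ^ n * ∑ p ∈ antidiagonal n,
          (√((p.1 : ℝ) + 1))⁻¹ * ((p.2 : ℝ) + 1) ^ ((d : ℝ) / 2 - 1) := by
      funext n
      rw [mul_sum]
      refine sum_congr rfl fun p hp => ?_
      rw [← HasAntidiagonal.mem_antidiagonal.1 hp, pow_add]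
      ring
    have hexp : ((d : ℝ) / 2 - 1) + 1 / 2 = ((d + 1 : ℕ) : ℝ) / 2 - 1 := by
      push_cast
      ring
    rw [hcoeff, ← hexp]
    exact hconv.trans (hfactor ▸ hweight)

theorem isTheta_coeff_centralBinomSeries_pow_div_centralBinom {d : ℕ} (hd : 1 ≤ d) :
    (fun n => PowerSeries.coeff n (centralBinomSeries ^ d) / n.centralBinom) =Θ[⊤]
      fun n => ((n : ℝ) + 1) ^ (((d : ℝ) - 1) / 2) := by
  refine ((isTheta_coeff_centralBinomSeries_pow hd).div isTheta_centralBinom).trans_eventuallyEq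
    (Filter.Eventually.of_forall fun n => ?_)
  have hn : 0 < (n : ℝ) + 1 := by positivity
  dsimp only
  rw [sqrt_eq_rpow]
  field_simp
  rw [← rpow_add hn]
  ring_nf

theorem stmt14 (d : ℕ) (hd : 1 ≤ d) :
    ∃ c₁ c₂ : ℝ, 0 < c₁ ∧ 0 < c₂ ∧ ∀ n : ℕ, 1 ≤ n →
      c₁ * ((n : ℝ) + 1) ^ (((d : ℝ) - 1) / 2) ≤
        ((n.factorial : ℝ) ^ 2 / (2 * n).factorial) *
          ∑ α ∈ Finset.piAntidiag (Finset.univ : Finset (Fin d)) n,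
            (∏ j : Fin d, ((2 * α j).factorial : ℝ)) /
              (∏ j : Fin d, ((α j).factorial : ℝ)) ^ 2 ∧
      ((n.factorial : ℝ) ^ 2 / (2 * n).factorial) *
          ∑ α ∈ Finset.piAntidiag (Finset.univ : Finset (Fin d)) n,
            (∏ j : Fin d, ((2 * α j).factorial : ℝ)) /
              (∏ j : Fin d, ((α j).factorial : ℝ)) ^ 2 ≤
        c₂ * ((n : ℝ) + 1) ^ (((d : ℝ) - 1) / 2) := by
  obtain ⟨c₁, c₂, hc₁, hc₂, hbounds⟩ :=
    (isTheta_top_iff_of_nonneg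
      (fun n => div_nonneg (coeff_centralBinomSeries_pow_nonneg d n) (by positivity))
      (fun n => by positivity)).1
    (isTheta_coeff_centralBinomSeries_pow_div_centralBinom hd)
  refine ⟨c₁, c₂, hc₁, hc₂, fun n _ => ?_⟩
  have hprefactor : (n.factorial : ℝ) ^ 2 / (2 * n).factorial = (n.centralBinom : ℝ)⁻¹ := by
    rw [Nat.cast_centralBinom_eq_factorial_div, inv_div]
  have hsummand (α : Fin d → ℕ) : (∏ j, ((2 * α j).factorial : ℝ)) /
      (∏ j, ((α j).factorial : ℝ)) ^ 2 = ∏ j, ((α j).centralBinom : ℝ) := by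
    simp only [← prod_pow, ← prod_div_distrib, Nat.cast_centralBinom_eq_factorial_div]
  simp only [hprefactor, hsummand, inv_mul_eq_div]
  simpa only [PowerSeries.coeff_pow_eq_sum_piAntidiag, centralBinomSeries, PowerSeries.coeff_mk]
    using hbounds n
end

section
/- Let n, m ∈ ℕ. There is a constant c = c(n, m) such that for every polynomial p of degree ≤ m with p(z) ≠ 0 for all |z| < 1, and for all r ∈ [0,1) and all integers k with 0 ≤ k < n, one has |(d^k/dz^k)(p(z)^n / p(rz))| ≤ c |p(0)|^{n-1} for all z in the open unit disc. -/
/-!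
Every zero `a` of `p` has `1 ≤ ‖a‖`. Factoring `p` over its roots gives `‖p‖₁ ≤ 2 ^ m ‖p(0)‖` for
the `ℓ¹` norm of the coefficients (as `‖X - a‖₁ ≤ 2 ‖a‖`), and `‖p(z)‖ ≤ 2 ^ m ‖q(z)‖` on the disc
for `q(z) = p(rz)` (as `‖z - a‖ ≤ 2 ‖rz - a‖`); moreover `‖q‖₁ ≤ ‖p‖₁`.

For a polynomial `g`, `(g ^ e)⁽ʲ⁾ = g ^ (e - j) U_j` where `U_j` is a polynomial of `ℓ¹` norm
`O(‖g‖₁ ^ j)`. By Leibniz, `(p ^ n q⁻¹)⁽ᵏ⁾` is a sum of terms `p ^ (n - j) U_j q ^ (-1 - l) V_l`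
with `j + l = k`. As `k < n`, such a term is `p ^ (n - 1 - k) (p / q) ^ (l + 1) U_j V_l`, which is
`O(‖p(0)‖ ^ (n - 1))` on the disc.
-/

open Finset Polynomial

theorem norm_sub_le_two_mul_norm_mul_sub {a z : ℂ} {r : ℝ} (ha : 1 ≤ ‖a‖) (hz : ‖z‖ ≤ 1)
    (hr₀ : 0 ≤ r) (hr₁ : r ≤ 1) : ‖z - a‖ ≤ 2 * ‖r * z - a‖ := by
  have hrz : ‖(r : ℂ) * z‖ = r * ‖z‖ := by simp [abs_of_nonneg hr₀]
  have hfar : 1 - r ≤ ‖r * z - a‖ := by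
    have := norm_sub_norm_le a (r * z)
    rw [norm_sub_rev] at this
    nlinarith
  calc ‖z - a‖ ≤ ‖z - r * z‖ + ‖r * z - a‖ := norm_sub_le_norm_sub_add_norm_sub _ _ _
    _ = (1 - r) * ‖z‖ + ‖r * z - a‖ := by
      rw [← one_sub_mul, ← Complex.ofReal_one, ← Complex.ofReal_sub, norm_mul,
        Complex.norm_real, Real.norm_of_nonneg (by linarith)]
    _ ≤ 2 * ‖r * z - a‖ := by nlinarith

namespace Polynomial

section L1Norm

variable {R : Type*} [SeminormedRing R]

noncomputable def l1Norm (p : R[X]) : ℝ := p.sum fun _ a ↦ ‖a‖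

theorem l1Norm_eq_sum_range {p : R[X]} {N : ℕ} (h : p.natDegree < N) :
    p.l1Norm = ∑ i ∈ range N, ‖p.coeff i‖ :=
  sum_over_range' p (fun _ ↦ norm_zero) N h

theorem l1Norm_eq_sum_support (p : R[X]) : p.l1Norm = ∑ i ∈ p.support, ‖p.coeff i‖ :=
  sum_def _ _

theorem l1Norm_nonneg (p : R[X]) : 0 ≤ p.l1Norm :=
  sum_nonneg fun _ _ ↦ norm_nonneg _

theorem l1Norm_zero : (0 : R[X]).l1Norm = 0 := by simp [l1Norm]

theorem l1Norm_monomial (n : ℕ) (a : R) : (monomial n a).l1Norm = ‖a‖ :=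
  sum_monomial_index a _ norm_zero

theorem l1Norm_C (a : R) : (C a).l1Norm = ‖a‖ := l1Norm_monomial 0 a

theorem l1Norm_add_le (p q : R[X]) : (p + q).l1Norm ≤ p.l1Norm + q.l1Norm := by
  have hp : p.natDegree < max p.natDegree q.natDegree + 1 := by omega
  have hq : q.natDegree < max p.natDegree q.natDegree + 1 := by omega
  rw [l1Norm_eq_sum_range ((natDegree_add_le p q).trans_lt (Nat.lt_succ_self _)),
    l1Norm_eq_sum_range hp, l1Norm_eq_sum_range hq, ← sum_add_distrib]
  exact sum_le_sum fun i _ ↦ by simpa only [coeff_add] using norm_add_le _ _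

theorem l1Norm_sum_le {ι : Type*} (s : Finset ι) (f : ι → R[X]) :
    (∑ i ∈ s, f i).l1Norm ≤ ∑ i ∈ s, (f i).l1Norm :=
  le_sum_of_subadditive _ l1Norm_zero.le l1Norm_add_le s f

theorem l1Norm_mul_le (p q : R[X]) : (p * q).l1Norm ≤ p.l1Norm * q.l1Norm := by
  rw [mul_eq_sum_sum, l1Norm_eq_sum_support p, l1Norm_eq_sum_support q, sum_mul_sum]
  refine (l1Norm_sum_le _ _).trans (sum_le_sum fun i _ ↦ ?_)
  rw [sum_def]
  refine (l1Norm_sum_le _ _).trans (sum_le_sum fun j _ ↦ ?_)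
  rw [l1Norm_monomial]
  exact norm_mul_le _ _

theorem l1Norm_C_mul_le (a : R) (p : R[X]) : (C a * p).l1Norm ≤ ‖a‖ * p.l1Norm :=
  (l1Norm_mul_le _ _).trans_eq (by rw [l1Norm_C])

theorem l1Norm_derivative_le (p : R[X]) : (derivative p).l1Norm ≤ p.natDegree * p.l1Norm := by
  rw [derivative_apply, l1Norm_eq_sum_support p, sum_def, mul_sum]
  refine (l1Norm_sum_le _ _).trans (sum_le_sum fun i hi ↦ ?_)
  rw [C_mul_X_pow_eq_monomial, l1Norm_monomial, ← nsmul_eq_mul']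
  exact norm_nsmul_le.trans
    (by gcongr; exact le_natDegree_of_mem_supp i hi)

theorem norm_eval_le_l1Norm [NormOneClass R] (p : R[X]) {x : R} (hx : ‖x‖ ≤ 1) :
    ‖p.eval x‖ ≤ p.l1Norm := by
  rw [eval_eq_sum, sum_def, l1Norm_eq_sum_support]
  refine (norm_sum_le _ _).trans (sum_le_sum fun i _ ↦ ?_)
  calc ‖p.coeff i * x ^ i‖ ≤ ‖p.coeff i‖ * ‖x‖ ^ i := norm_mul_le_of_le le_rfl (norm_pow_le x i)
    _ ≤ ‖p.coeff i‖ := mul_le_of_le_one_right (norm_nonneg _) (pow_le_one₀ (norm_nonneg x) hx)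

theorem l1Norm_X_sub_C_le [NormOneClass R] (a : R) : (X - C a).l1Norm ≤ 1 + ‖a‖ := by
  rw [sub_eq_add_neg, ← C_neg, ← norm_neg a]
  refine (l1Norm_add_le _ _).trans_eq ?_
  rw [← monomial_one_one_eq_X, l1Norm_monomial, l1Norm_C, norm_one]

theorem l1Norm_one [NormOneClass R] : (1 : R[X]).l1Norm = 1 := by
  rw [← C_1, l1Norm_C, norm_one]

end L1Norm

theorem l1Norm_multiset_prod_le {R : Type*} [SeminormedCommRing R] [NormOneClass R]
    (s : Multiset R[X]) : s.prod.l1Norm ≤ (s.map l1Norm).prod := by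
  induction s using Multiset.induction with
  | empty => simp [l1Norm_one]
  | cons p s ih =>
    rw [Multiset.prod_cons, Multiset.map_cons, Multiset.prod_cons]
    exact (l1Norm_mul_le _ _).trans (by gcongr; exact l1Norm_nonneg p)

theorem l1Norm_comp_C_mul_X_le {R : Type*} [SeminormedCommRing R] [NormOneClass R] (p : R[X])
    {a : R} (ha : ‖a‖ ≤ 1) :
    (p.comp (C a * X)).l1Norm ≤ p.l1Norm := by
  rw [comp_eq_sum_left, sum_def, l1Norm_eq_sum_support p]
  refine (l1Norm_sum_le _ _).trans (sum_le_sum fun i _ ↦ ?_)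
  rw [mul_pow, ← C_pow, ← mul_assoc, ← C_mul, C_mul_X_pow_eq_monomial, l1Norm_monomial]
  exact (norm_mul_le_of_le le_rfl (norm_pow_le a i)).trans
    (mul_le_of_le_one_right (norm_nonneg _) (pow_le_one₀ (norm_nonneg a) ha))

theorem natDegree_comp_C_mul_X_le {R : Type*} [Semiring R] (p : R[X]) (a : R) :
    (p.comp (C a * X)).natDegree ≤ p.natDegree :=
  natDegree_le_iff_coeff_eq_zero.mpr fun n hn ↦ by
    rw [comp_C_mul_X_coeff, coeff_eq_zero_of_natDegree_lt hn, zero_mul]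

/-- `(g ^ e)⁽ʲ⁾ = g ^ (e - j) * zpowDerivFactor g e j`, see `iteratedDeriv_eval_zpow`. -/
noncomputable def zpowDerivFactor {R : Type*} [CommRing R] (g : R[X]) (e : ℤ) : ℕ → R[X]
  | 0 => 1
  | j + 1 => C ((e - j : ℤ) : R) * derivative g * zpowDerivFactor g e j +
      g * derivative (zpowDerivFactor g e j)

theorem natDegree_zpowDerivFactor_le {R : Type*} [CommRing R] (g : R[X]) (e : ℤ) (j : ℕ) :
    (zpowDerivFactor g e j).natDegree ≤ j * g.natDegree := by
  induction j with
  | zero => simp [zpowDerivFactor]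
  | succ j ih =>
    rw [zpowDerivFactor]
    refine (natDegree_add_le _ _).trans (max_le ?_ ?_)
    · refine natDegree_mul_le.trans ?_
      have := (natDegree_C_mul_le ((e - j : ℤ) : R) (derivative g)).trans
        ((natDegree_derivative_le g).trans (Nat.sub_le _ 1))
      nlinarith
    · refine natDegree_mul_le.trans ?_
      have := (natDegree_derivative_le (zpowDerivFactor g e j)).trans (Nat.sub_le _ 1)
      nlinarith

theorem iteratedDeriv_eval_zpow {𝕜 : Type*} [NontriviallyNormedField 𝕜] (g : 𝕜[X]) (e : ℤ)
    (j : ℕ) {z : 𝕜} (hz : g.eval z ≠ 0) :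
    iteratedDeriv j (fun w ↦ g.eval w ^ e) z =
      g.eval z ^ (e - j) * (zpowDerivFactor g e j).eval z := by
  induction j generalizing z with
  | zero => simp [zpowDerivFactor]
  | succ j ih =>
    have hev : iteratedDeriv j (fun w ↦ g.eval w ^ e) =ᶠ[nhds z]
        fun w ↦ g.eval w ^ (e - j) * (zpowDerivFactor g e j).eval w :=
      (g.continuous.continuousAt.eventually_ne hz).mono fun w hw ↦ ih hw
    have hF : HasDerivAt (fun w ↦ g.eval w ^ (e - j) * (zpowDerivFactor g e j).eval w)
        (((e - j : ℤ) : 𝕜) * g.eval z ^ (e - j - 1) * (derivative g).eval z *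
            (zpowDerivFactor g e j).eval z +
          g.eval z ^ (e - j) * (derivative (zpowDerivFactor g e j)).eval z) z :=
      ((hasDerivAt_zpow _ _ (.inl hz)).comp z (g.hasDerivAt z)).mul
        ((zpowDerivFactor g e j).hasDerivAt z)
    rw [iteratedDeriv_succ, hev.deriv_eq, hF.deriv, zpowDerivFactor,
      show e - (j + 1 : ℕ) = e - j - 1 by push_cast; ring, zpow_sub_one₀ hz]
    simp only [eval_add, eval_mul, eval_C]
    field_simp

section RCLike

variable {𝕜 : Type*} [RCLike 𝕜]

theorem l1Norm_zpowDerivFactor_le {g : 𝕜[X]} {d : ℕ} (hg : g.natDegree ≤ d) {e : ℤ} {j : ℕ}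
    {M : ℝ} (hM : |(e : ℝ)| + 2 * j ≤ M) :
    (zpowDerivFactor g e j).l1Norm ≤ (M * d * g.l1Norm) ^ j := by
  induction j with
  | zero => simp [zpowDerivFactor, l1Norm_one]
  | succ j ih =>
    push_cast at hM
    set F := zpowDerivFactor g e j
    have hM₀ : 0 ≤ M := by linarith [abs_nonneg (e : ℝ), (j.cast_nonneg : (0 : ℝ) ≤ j)]
    have hc : ‖((e - j : ℤ) : 𝕜)‖ + j ≤ M := by
      rw [show ‖((e - j : ℤ) : 𝕜)‖ = |(e : ℝ) - j| by
        simpa using norm_intCast_eq_abs_mul_norm_one 𝕜 (e - j)]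
      linarith [abs_sub (e : ℝ) j, abs_of_nonneg (j.cast_nonneg : (0 : ℝ) ≤ j)]
    have hg' : (derivative g).l1Norm ≤ d * g.l1Norm :=
      (l1Norm_derivative_le g).trans (by gcongr; exact l1Norm_nonneg g)
    have hF' : (derivative F).l1Norm ≤ (j * d) * F.l1Norm :=
      (l1Norm_derivative_le F).trans (by
        gcongr
        · exact l1Norm_nonneg F
        · exact_mod_cast (natDegree_zpowDerivFactor_le g e j).trans (by gcongr))
    have hF := ih (by linarith)
    have hg₀ := l1Norm_nonneg g
    calc (zpowDerivFactor g e (j + 1)).l1Norm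
        ≤ ‖((e - j : ℤ) : 𝕜)‖ * (d * g.l1Norm) * F.l1Norm + g.l1Norm * ((j * d) * F.l1Norm) := by
          rw [zpowDerivFactor]
          refine (l1Norm_add_le _ _).trans (add_le_add ?_ ?_)
          · exact (l1Norm_mul_le _ _).trans (mul_le_mul_of_nonneg_right
              ((l1Norm_C_mul_le _ _).trans (mul_le_mul_of_nonneg_left hg' (norm_nonneg _)))
              (l1Norm_nonneg _))
          · exact (l1Norm_mul_le _ _).trans (mul_le_mul_of_nonneg_left hF' (l1Norm_nonneg _))
      _ = (‖((e - j : ℤ) : 𝕜)‖ + j) * d * g.l1Norm * F.l1Norm := by ring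
      _ ≤ M * d * g.l1Norm * (M * d * g.l1Norm) ^ j := by
          gcongr
          exact l1Norm_nonneg F
      _ = (M * d * g.l1Norm) ^ (j + 1) := by ring

theorem norm_eval_zpowDerivFactor_le {g : 𝕜[X]} {d : ℕ} (hg : g.natDegree ≤ d) {e : ℤ} {j : ℕ}
    {M L : ℝ} (hM : |(e : ℝ)| + 2 * j ≤ M) (hL : g.l1Norm ≤ L) {z : 𝕜} (hz : ‖z‖ ≤ 1) :
    ‖(zpowDerivFactor g e j).eval z‖ ≤ (M * d * L) ^ j := by
  have hM₀ : 0 ≤ M := by linarith [abs_nonneg (e : ℝ), (j.cast_nonneg : (0 : ℝ) ≤ j)]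
  refine (norm_eval_le_l1Norm _ hz).trans ((l1Norm_zpowDerivFactor_le hg hM).trans ?_)
  gcongr
  exact mul_nonneg (by positivity) (l1Norm_nonneg g)

theorem contDiffAt_eval_zpow (g : 𝕜[X]) (e : ℤ) {z : 𝕜} (hz : g.eval z ≠ 0) {N : WithTop ℕ∞} :
    ContDiffAt 𝕜 N (fun w ↦ g.eval w ^ e) z := by
  have hg := analyticAt_id.aeval_polynomial (𝕜 := 𝕜) (z := z) g
  simp only [id, aeval_def, eval₂_eq_eval_map, Algebra.algebraMap_self, map_id] at hg
  exact (hg.fun_zpow hz).contDiffAt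

theorem norm_iteratedDeriv_eval_zpow_mul_le {P Q : 𝕜[X]} {n k d j : ℕ} (hk : k < n)
    (hj : j ≤ k) (hPd : P.natDegree ≤ d) (hQd : Q.natDegree ≤ d) {L ρ : ℝ}
    (hPL : P.l1Norm ≤ L) (hQL : Q.l1Norm ≤ L) {z : 𝕜} (hz : ‖z‖ ≤ 1) (hP : P.eval z ≠ 0)
    (hQ : Q.eval z ≠ 0) (hPQ : ‖P.eval z‖ ≤ ρ * ‖Q.eval z‖) :
    ‖iteratedDeriv j (fun w ↦ P.eval w ^ (n : ℤ)) z *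
        iteratedDeriv (k - j) (fun w ↦ Q.eval w ^ (-1 : ℤ)) z‖ ≤
      ρ ^ (k - j + 1) * ((3 * n * d) ^ k * L ^ (n - 1)) := by
  set K : ℝ := 3 * n * d
  have hb : 0 < ‖Q.eval z‖ := norm_pos_iff.mpr hQ
  have hρ : 0 ≤ ρ := nonneg_of_mul_nonneg_left ((norm_nonneg _).trans hPQ) hb
  have hL : 0 ≤ L := (l1Norm_nonneg P).trans hPL
  have hkn : (k : ℝ) + 1 ≤ n := by exact_mod_cast hk
  have hU : ‖(zpowDerivFactor P n j).eval z‖ ≤ (K * L) ^ j := by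
    have : (j : ℝ) ≤ k := by exact_mod_cast hj
    refine norm_eval_zpowDerivFactor_le (M := 3 * n) hPd ?_ hPL hz
    rw [Int.cast_natCast, abs_of_nonneg n.cast_nonneg]
    linarith
  have hV : ‖(zpowDerivFactor Q (-1) (k - j)).eval z‖ ≤ (K * L) ^ (k - j) := by
    have : ((k - j : ℕ) : ℝ) ≤ k := by exact_mod_cast Nat.sub_le k j
    refine norm_eval_zpowDerivFactor_le (M := 3 * n) hQd ?_ hQL hz
    norm_num
    linarith
  have hratio : ‖P.eval z‖ ^ (k - j + 1) * (‖Q.eval z‖ ^ (k - j + 1))⁻¹ ≤ ρ ^ (k - j + 1) := by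
    rw [← div_eq_mul_inv, div_le_iff₀ (pow_pos hb _), ← mul_pow]
    exact pow_le_pow_left₀ (norm_nonneg _) hPQ _
  have haL : ‖P.eval z‖ ≤ L := (norm_eval_le_l1Norm P hz).trans hPL
  have hpow : L ^ (n - 1 - k) * ((K * L) ^ j * (K * L) ^ (k - j)) = K ^ k * L ^ (n - 1) := by
    rw [← pow_add, Nat.add_sub_cancel' hj, mul_pow, mul_left_comm, ← pow_add,
      Nat.sub_add_cancel (by omega)]
  rw [iteratedDeriv_eval_zpow _ _ _ hP, iteratedDeriv_eval_zpow _ _ _ hQ]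
  simp only [norm_mul, norm_zpow]
  -- `‖P‖ ^ (n - j) ‖Q‖ ^ (-1 - l) = ‖P‖ ^ (n - 1 - k) (‖P‖ / ‖Q‖) ^ (l + 1)`, using `k < n`
  rw [show (n : ℤ) - j = ((n - 1 - k + (k - j + 1) : ℕ) : ℤ) by omega, zpow_natCast, pow_add,
    show -1 - ((k - j : ℕ) : ℤ) = -((k - j + 1 : ℕ) : ℤ) by omega, zpow_neg, zpow_natCast]
  calc _ = (‖P.eval z‖ ^ (k - j + 1) * (‖Q.eval z‖ ^ (k - j + 1))⁻¹) *
        (‖P.eval z‖ ^ (n - 1 - k) * (‖(zpowDerivFactor P n j).eval z‖ *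
          ‖(zpowDerivFactor Q (-1) (k - j)).eval z‖)) := by ring
    _ ≤ ρ ^ (k - j + 1) * (L ^ (n - 1 - k) * ((K * L) ^ j * (K * L) ^ (k - j))) := by
      gcongr
    _ = ρ ^ (k - j + 1) * (K ^ k * L ^ (n - 1)) := by rw [hpow]

theorem norm_iteratedDeriv_eval_pow_div_eval_le {P Q : 𝕜[X]} {n k d : ℕ} (hk : k < n)
    (hPd : P.natDegree ≤ d) (hQd : Q.natDegree ≤ d) {L ρ : ℝ} (hPL : P.l1Norm ≤ L)
    (hQL : Q.l1Norm ≤ L) {z : 𝕜} (hz : ‖z‖ ≤ 1) (hP : P.eval z ≠ 0) (hQ : Q.eval z ≠ 0)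
    (hPQ : ‖P.eval z‖ ≤ ρ * ‖Q.eval z‖) :
    ‖iteratedDeriv k (fun w ↦ P.eval w ^ n / Q.eval w) z‖ ≤
      ρ * ((1 + ρ) * (3 * n * d)) ^ k * L ^ (n - 1) := by
  have hfun : (fun w ↦ P.eval w ^ n / Q.eval w) =
      (fun w ↦ P.eval w ^ (n : ℤ)) * fun w ↦ Q.eval w ^ (-1 : ℤ) := by
    funext w
    simp [div_eq_mul_inv]
  rw [hfun, iteratedDeriv_mul (contDiffAt_eval_zpow P n hP) (contDiffAt_eval_zpow Q (-1) hQ)]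
  calc _ ≤ ∑ j ∈ range (k + 1),
          k.choose j * (ρ ^ (k - j + 1) * ((3 * n * d) ^ k * L ^ (n - 1))) := by
        refine (norm_sum_le _ _).trans (sum_le_sum fun j hj ↦ ?_)
        rw [mul_assoc, norm_mul, RCLike.norm_natCast]
        gcongr
        exact norm_iteratedDeriv_eval_zpow_mul_le hk (Nat.lt_succ_iff.mp (mem_range.mp hj))
          hPd hQd hPL hQL hz hP hQ hPQ
    _ = ρ * ((1 + ρ) * (3 * n * d)) ^ k * L ^ (n - 1) := by
        rw [mul_pow (1 + ρ), add_pow, sum_mul, mul_sum, sum_mul]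
        exact sum_congr rfl fun j _ ↦ by ring

end RCLike

section Roots

theorem norm_eval_eq_mul_prod_roots (p : ℂ[X]) (z : ℂ) :
    ‖p.eval z‖ = ‖p.leadingCoeff‖ * (p.roots.map fun a ↦ ‖z - a‖).prod := by
  conv_lhs => rw [(IsAlgClosed.splits p).eq_prod_roots]
  rw [eval_mul, eval_C, norm_mul, eval_multiset_prod, Multiset.map_map]
  congr 1
  simpa [Multiset.map_map, Function.comp_def] using
    map_multiset_prod (normHom (α := ℂ)) (p.roots.map (z - ·))

variable {p : ℂ[X]}

theorem one_le_norm_of_mem_roots (hp : ∀ z : ℂ, ‖z‖ < 1 → p.eval z ≠ 0) {a : ℂ}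
    (ha : a ∈ p.roots) : 1 ≤ ‖a‖ :=
  not_lt.mp fun h ↦ hp a h (isRoot_of_mem_roots ha)

theorem l1Norm_le_two_pow_mul_norm_eval_zero (h : ∀ a ∈ p.roots, 1 ≤ ‖a‖) :
    p.l1Norm ≤ 2 ^ p.natDegree * ‖p.eval 0‖ := by
  rw [norm_eval_eq_mul_prod_roots, ← IsAlgClosed.card_roots_eq_natDegree, mul_left_comm,
    ← Multiset.prod_replicate, ← Multiset.map_const', ← Multiset.prod_map_mul]
  conv_lhs => rw [(IsAlgClosed.splits p).eq_prod_roots]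
  refine (l1Norm_C_mul_le _ _).trans (mul_le_mul_of_nonneg_left ?_ (norm_nonneg _))
  refine (l1Norm_multiset_prod_le _).trans ?_
  rw [Multiset.map_map]
  refine Multiset.prod_map_le_prod_map₀ _ _ (fun _ _ ↦ l1Norm_nonneg _) fun a ha ↦ ?_
  have := h a ha
  simp only [Function.comp_apply, zero_sub, norm_neg]
  linarith [l1Norm_X_sub_C_le a]

theorem norm_eval_le_two_pow_mul_norm_eval_mul (h : ∀ a ∈ p.roots, 1 ≤ ‖a‖) {z : ℂ}
    (hz : ‖z‖ ≤ 1) {r : ℝ} (hr₀ : 0 ≤ r) (hr₁ : r ≤ 1) :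
    ‖p.eval z‖ ≤ 2 ^ p.natDegree * ‖p.eval (r * z)‖ := by
  rw [norm_eval_eq_mul_prod_roots, norm_eval_eq_mul_prod_roots, mul_left_comm,
    ← IsAlgClosed.card_roots_eq_natDegree, ← Multiset.prod_replicate, ← Multiset.map_const',
    ← Multiset.prod_map_mul]
  exact mul_le_mul_of_nonneg_left (Multiset.prod_map_le_prod_map₀ _ _ (fun _ _ ↦ norm_nonneg _)
    fun a ha ↦ norm_sub_le_two_mul_norm_mul_sub (h a ha) hz hr₀ hr₁) (norm_nonneg _)

end Roots

end Polynomial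

theorem stmt16 (n m : ℕ) :
    ∃ c : ℝ, 0 < c ∧ ∀ p : Polynomial ℂ, p.natDegree ≤ m →
      (∀ z : ℂ, ‖z‖ < 1 → Polynomial.eval z p ≠ 0) →
      ∀ r : ℝ, 0 ≤ r → r < 1 → ∀ k : ℕ, k < n → ∀ z : ℂ, ‖z‖ < 1 →
        ‖iteratedDeriv k
            (fun w : ℂ => (Polynomial.eval w p) ^ n / Polynomial.eval ((r : ℂ) * w) p) z‖ ≤
          c * ‖Polynomial.eval 0 p‖ ^ (n - 1) := by
  refine ⟨2 ^ m * (1 + (1 + 2 ^ m) * (3 * n * m)) ^ n * (2 ^ m) ^ n, by positivity,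
    fun p hdeg hp r hr₀ hr₁ k hk z hz ↦ ?_⟩
  have hroots : ∀ a ∈ p.roots, 1 ≤ ‖a‖ := fun a ha ↦ one_le_norm_of_mem_roots hp ha
  have h2m : (2 : ℝ) ^ p.natDegree ≤ 2 ^ m := pow_le_pow_right₀ one_le_two hdeg
  have hq : ∀ w, (p.comp (C (r : ℂ) * X)).eval w = p.eval (r * w) := fun w ↦ by simp
  have hrz : ‖(r : ℂ) * z‖ < 1 := by
    simpa [abs_of_nonneg hr₀] using mul_lt_one_of_nonneg_of_lt_one_left hr₀ hr₁ hz.le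
  have hpL : p.l1Norm ≤ 2 ^ m * ‖p.eval 0‖ :=
    (l1Norm_le_two_pow_mul_norm_eval_zero hroots).trans (by gcongr)
  have hpq : ‖p.eval z‖ ≤ 2 ^ m * ‖p.eval (r * z)‖ :=
    (norm_eval_le_two_pow_mul_norm_eval_mul hroots hz.le hr₀ hr₁.le).trans (by gcongr)
  have hqL : (p.comp (C (r : ℂ) * X)).l1Norm ≤ 2 ^ m * ‖p.eval 0‖ :=
    (l1Norm_comp_C_mul_X_le p (by simpa [abs_of_nonneg hr₀] using hr₁.le)).trans hpL
  have key := norm_iteratedDeriv_eval_pow_div_eval_le hk hdeg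
    ((natDegree_comp_C_mul_X_le p _).trans hdeg) hpL hqL hz.le (hp z hz)
    (by rw [hq]; exact hp _ hrz) (by rwa [hq])
  simp only [hq] at key
  refine key.trans ?_
  set K : ℝ := (1 + 2 ^ m) * (3 * n * m)
  have hK : K ^ k ≤ (1 + K) ^ n :=
    (pow_le_pow_left₀ (by positivity) (by linarith) k).trans
      (pow_le_pow_right₀ (by linarith [show 0 ≤ K by positivity]) hk.le)
  rw [mul_pow (2 ^ m : ℝ), ← mul_assoc]
  gcongr
  · exact one_le_pow₀ one_le_two
  · exact Nat.sub_le n 1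
end

section
/- Let H be a Hilbert space of functions on a set X, and let the multiplication maps by multipliers act on H. Suppose φ, ψ are multipliers of H and n, m ∈ ℕ_0 are such that φ^n lies in the closed invariant subspace generated by φ^{n+1}, and ψ^m lies in the closed invariant subspace generated by ψ^{m+1}. Then φ^n ψ^m lies in the closed invariant subspace generated by φ^{n+1} ψ^{m+1}. -/
theorem stmt17 {X : Type*} {E : Type*} [NormedAddCommGroup E] [InnerProductSpace ℂ E]
    [CompleteSpace E]
    (J : E →ₗ[ℂ] (X → ℂ)) (hJ : Function.Injective J)
    (one : E) (hone : J one = fun _ => 1)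
    (Mφ Mψ : E →L[ℂ] E) (φ ψ : X → ℂ)
    (hMφ : ∀ h : E, J (Mφ h) = φ * J h) (hMψ : ∀ h : E, J (Mψ h) = ψ * J h)
    (n m : ℕ)
    (hφ : (Mφ ^ n) one ∈
      closure {g : E | ∃ (T : E →L[ℂ] E) (u : X → ℂ),
        (∀ h : E, J (T h) = u * J h) ∧ g = T ((Mφ ^ (n + 1)) one)})
    (hψ : (Mψ ^ m) one ∈
      closure {g : E | ∃ (T : E →L[ℂ] E) (u : X → ℂ),
        (∀ h : E, J (T h) = u * J h) ∧ g = T ((Mψ ^ (m + 1)) one)}) :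
    (Mφ ^ n) ((Mψ ^ m) one) ∈
      closure {g : E | ∃ (T : E →L[ℂ] E) (u : X → ℂ),
        (∀ h : E, J (T h) = u * J h) ∧ g = T ((Mφ ^ (n + 1)) ((Mψ ^ (m + 1)) one))} := by
  -- powers are multiplication operators
  have hpow : ∀ (M : E →L[ℂ] E) (w : X → ℂ), (∀ h : E, J (M h) = w * J h) →
      ∀ (k : ℕ) (h : E), J ((M ^ k) h) = w ^ k * J h := by
    intro M w hM k
    induction k with
    | zero => intro h; simp
    | succ k ih =>
      intro h
      rw [pow_succ, pow_succ]
      have : (M ^ k * M) h = (M ^ k) (M h) := rfl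
      rw [this, ih, hM, mul_assoc]
  -- multiplication operators commute
  have hcomm : ∀ (T S : E →L[ℂ] E) (u v : X → ℂ),
      (∀ h : E, J (T h) = u * J h) → (∀ h : E, J (S h) = v * J h) →
      ∀ h : E, T (S h) = S (T h) := by
    intro T S u v hT hS h
    apply hJ
    rw [hT, hS, hS, hT, mul_left_comm]
  rw [Metric.mem_closure_iff] at hφ hψ ⊢
  intro ε hε
  set A : E →L[ℂ] E := Mψ ^ m with hA
  have hAmul : ∀ h : E, J (A h) = ψ ^ m * J h := hpow Mψ ψ hMψ m
  obtain ⟨g, ⟨T, u, hTu, rfl⟩, hg⟩ := hφ (ε / 2 / (‖A‖ + 1)) (by positivity)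
  set B : E →L[ℂ] E := T.comp (Mφ ^ (n + 1)) with hB
  have hBmul : ∀ h : E, J (B h) = (u * φ ^ (n + 1)) * J h := by
    intro h
    have : B h = T ((Mφ ^ (n + 1)) h) := rfl
    rw [this, hTu, hpow Mφ φ hMφ (n + 1), mul_assoc]
  obtain ⟨g', ⟨S, v, hSv, rfl⟩, hh⟩ := hψ (ε / 2 / (‖B‖ + 1)) (by positivity)
  refine ⟨(T.comp S) ((Mφ ^ (n + 1)) ((Mψ ^ (m + 1)) one)), ⟨T.comp S, u * v, ?_, rfl⟩, ?_⟩
  · intro h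
    have : (T.comp S) h = T (S h) := rfl
    rw [this, hTu, hSv, mul_assoc]
  · -- identify the points
    have hφpow : ∀ h : E, J ((Mφ ^ n) h) = φ ^ n * J h := hpow Mφ φ hMφ n
    have hφpow1 : ∀ h : E, J ((Mφ ^ (n + 1)) h) = φ ^ (n + 1) * J h := hpow Mφ φ hMφ (n + 1)
    have hψpow1 : ∀ h : E, J ((Mψ ^ (m + 1)) h) = ψ ^ (m + 1) * J h := hpow Mψ ψ hMψ (m + 1)
    have e1 : (Mφ ^ n) (A one) = A ((Mφ ^ n) one) :=
      hcomm _ _ _ _ hφpow hAmul one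
    have e2 : A (T ((Mφ ^ (n + 1)) one)) = B (A one) := by
      have h1 : A (T ((Mφ ^ (n + 1)) one)) = T (A ((Mφ ^ (n + 1)) one)) :=
        hcomm _ _ _ _ hAmul hTu _
      have h2 : A ((Mφ ^ (n + 1)) one) = (Mφ ^ (n + 1)) (A one) :=
        hcomm _ _ _ _ hAmul hφpow1 one
      rw [h1, h2]; rfl
    have e3 : B (S ((Mψ ^ (m + 1)) one)) =
        (T.comp S) ((Mφ ^ (n + 1)) ((Mψ ^ (m + 1)) one)) := by
      have h1 : (Mφ ^ (n + 1)) (S ((Mψ ^ (m + 1)) one)) =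
          S ((Mφ ^ (n + 1)) ((Mψ ^ (m + 1)) one)) :=
        hcomm _ _ _ _ hφpow1 hSv _
      show T ((Mφ ^ (n + 1)) (S ((Mψ ^ (m + 1)) one))) = T (S _)
      rw [h1]
    calc dist ((Mφ ^ n) (A one)) ((T.comp S) ((Mφ ^ (n + 1)) ((Mψ ^ (m + 1)) one)))
        ≤ dist ((Mφ ^ n) (A one)) (A (T ((Mφ ^ (n + 1)) one)))
          + dist (A (T ((Mφ ^ (n + 1)) one)))
              ((T.comp S) ((Mφ ^ (n + 1)) ((Mψ ^ (m + 1)) one))) := dist_triangle _ _ _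
      _ < ε / 2 + ε / 2 := by
          gcongr
          · rw [e1]
            calc dist (A ((Mφ ^ n) one)) (A (T ((Mφ ^ (n + 1)) one)))
                ≤ ‖A‖ * dist ((Mφ ^ n) one) (T ((Mφ ^ (n + 1)) one)) :=
                  A.lipschitz.dist_le_mul _ _
              _ ≤ (‖A‖ + 1) * dist ((Mφ ^ n) one) (T ((Mφ ^ (n + 1)) one)) :=
                  mul_le_mul_of_nonneg_right (by linarith) dist_nonneg
              _ < (‖A‖ + 1) * (ε / 2 / (‖A‖ + 1)) := by
                  have : (0:ℝ) < ‖A‖ + 1 := by positivity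
                  exact (mul_lt_mul_iff_right₀ this).mpr hg
              _ = ε / 2 := by field_simp
          · rw [e2, ← e3]
            calc dist (B (A one)) (B (S ((Mψ ^ (m + 1)) one)))
                ≤ ‖B‖ * dist (A one) (S ((Mψ ^ (m + 1)) one)) :=
                  B.lipschitz.dist_le_mul _ _
              _ ≤ (‖B‖ + 1) * dist (A one) (S ((Mψ ^ (m + 1)) one)) :=
                  mul_le_mul_of_nonneg_right (by linarith) dist_nonneg
              _ < (‖B‖ + 1) * (ε / 2 / (‖B‖ + 1)) := by
                  have : (0:ℝ) < ‖B‖ + 1 := by positivity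
                  exact (mul_lt_mul_iff_right₀ this).mpr hh
              _ = ε / 2 := by field_simp
      _ = ε := by ring
end
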